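/- arXiv:2602.14967 — 2 statements merged into one kernel-verified Lean document; each statement's English description precedes it below -/
import Mathlib

section
/- Let V and W be real Hilbert spaces, V_h ⊆ V and W_h ⊆ W subspaces, B : V → W bounded linear, A : V × V → ℝ bilinear with A(v,v) ≥ C·‖v‖² (C > 0), f a continuous linear functional on V, K ⊆ V nonempty closed convex, u* ∈ K a solution of the variational inequality A(u*, v − u*) ≥ f(v − u*) for all v ∈ K, and Π : V → V_h a linear (Fortin) map with ⟨B(v − Π v), w⟩ = 0 for all v ∈ V and w ∈ W_h. Let S ⊆ W be convex, R : W → ℝ convex on S, α_k > 0, and suppose for every k ≥ 1 there are u_k ∈ V_h, ψ_k, ψ_{k−1} ∈ W_h and o_k, o_{k−1} ∈ S such that R is differentiable at o_k and o_{k−1} with gradients ∇R(o_k) = ψ_k and ∇R(o_{k−1}) = ψ_{k−1}, ⟨o_k − B u_k, w⟩ = 0 for all w ∈ W_h, o* := B u* ∈ S, and α_k·A(u_k, v) + ⟨B v, ψ_k − ψ_{k−1}⟩ = α_k·f(v) for all v ∈ V_h. Then, writing D(p, q) := R(p) − R(q) − ⟨∇R(q), p − q⟩ and e_k := u_k − Π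 u*, one has for every k: D(o*, o_k) + α_k·A(e_k, e_k) ≤ D(o*, o_{k−1}) − α_k·A(Π u*, e_k) + α_k·f(e_k). -/
/-!
The three-point identity for Bregman distances gives
`D(o*, o_k) = D(o*, o_{k-1}) - D(o_k, o_{k-1}) + ⟪ψ_k - ψ_{k-1}, o_k - o*⟫`, and
`D(o_k, o_{k-1}) ≥ 0` by convexity of `R`. Since `ψ_k - ψ_{k-1} ∈ W_h`, the observation condition
and the Fortin property replace `o_k - o*` by `B e_k` in the last term, which the discrete scheme
tested with `e_k ∈ V_h` evaluates as `α_k (f(e_k) - A(u_k, e_k))`; finally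
`A(u_k, e_k) = A(e_k, e_k) + A(Π u*, e_k)`.
-/

open scoped RealInnerProductSpace

theorem ConvexOn.fderiv_apply_sub_le {E : Type*} [NormedAddCommGroup E] [NormedSpace ℝ E]
    {S : Set E} {R : E → ℝ} {L : E →L[ℝ] ℝ} {p q : E}
    (hR : ConvexOn ℝ S R) (hp : p ∈ S) (hq : q ∈ S) (hL : HasFDerivAt R L q) :
    L (p - q) ≤ R p - R q := by
  let γ : ℝ →ᵃ[ℝ] E := AffineMap.lineMap q p
  have hderiv : HasDerivAt (R ∘ γ) (L (p - q)) 0 :=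
    HasFDerivAt.comp_hasDerivAt (0 : ℝ) (by simpa [γ] using hL) AffineMap.hasDerivAt_lineMap
  simpa [slope_def_field, γ] using
    (hR.comp_affineMap γ).le_slope_of_hasDerivAt (by simpa [γ] using hq) (by simpa [γ] using hp)
      zero_lt_one hderiv

section Bregman

variable {W : Type*} [NormedAddCommGroup W] [InnerProductSpace ℝ W]

/-- `bregmanDist R g p q` is `D(p, q)` with the gradient `g = ∇R(q)` passed explicitly, so that
the definition makes sense without any differentiability assumption. -/
def bregmanDist (R : W → ℝ) (g p q : W) : ℝ :=
  R p - R q - ⟪g, p - q⟫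

theorem bregmanDist_nonneg [CompleteSpace W] {S : Set W} {R : W → ℝ} {g p q : W}
    (hR : ConvexOn ℝ S R) (hp : p ∈ S) (hq : q ∈ S) (hg : HasGradientAt R g q) :
    0 ≤ bregmanDist R g p q := by
  have h := hR.fderiv_apply_sub_le hp hq hg.hasFDerivAt
  rw [InnerProductSpace.toDual_apply_apply] at h
  rw [bregmanDist]
  linarith

theorem bregmanDist_three_point (R : W → ℝ) (g g' p q q' : W) :
    bregmanDist R g p q = bregmanDist R g' p q' - bregmanDist R g' q q' + ⟪g - g', q - p⟫ := by
  simp only [bregmanDist, inner_sub_left, inner_sub_right]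
  ring

end Bregman

theorem statement9_general
    {V W : Type*} [NormedAddCommGroup V] [InnerProductSpace ℝ V]
    [NormedAddCommGroup W] [InnerProductSpace ℝ W] [CompleteSpace W]
    (Vh : Submodule ℝ V) (Wh : Submodule ℝ W)
    (B : V →L[ℝ] W)
    (A : V →ₗ[ℝ] V →ₗ[ℝ] ℝ)
    (f : V →L[ℝ] ℝ)
    (ustar : V)
    (Pih : V →ₗ[ℝ] V) (hPihmem : ∀ v : V, Pih v ∈ Vh)
    (hFortin : ∀ v : V, ∀ w ∈ Wh, ⟪B (v - Pih v), w⟫ = 0)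
    (S : Set W)
    (R : W → ℝ) (hRconv : ConvexOn ℝ S R)
    (α : ℕ → ℝ)
    (u : ℕ → V) (ψ : ℕ → W) (o : ℕ → W)
    (humem : ∀ k, 1 ≤ k → u k ∈ Vh) (hψmem : ∀ k, ψ k ∈ Wh)
    (homem : ∀ k, o k ∈ S)
    (hgrad : ∀ k, HasGradientAt R (ψ k) (o k))
    (hobs : ∀ k, 1 ≤ k → ∀ w ∈ Wh, ⟪o k - B (u k), w⟫ = 0)
    (hscheme : ∀ k, 1 ≤ k → ∀ v ∈ Vh,
      α k * A (u k) v + ⟪B v, ψ k - ψ (k - 1)⟫ = α k * f v) :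
    ∀ k, 1 ≤ k →
      (R (B ustar) - R (o k) - ⟪ψ k, B ustar - o k⟫)
          + α k * A (u k - Pih ustar) (u k - Pih ustar)
        ≤ (R (B ustar) - R (o (k - 1)) - ⟪ψ (k - 1), B ustar - o (k - 1)⟫)
          - α k * A (Pih ustar) (u k - Pih ustar)
          + α k * f (u k - Pih ustar) := by
  intro k hk
  set e := u k - Pih ustar with he
  set δψ := ψ k - ψ (k - 1)
  have hδψ_mem : δψ ∈ Wh := Wh.sub_mem (hψmem k) (hψmem (k - 1))
  have horth : ⟪δψ, o k - B ustar⟫ = ⟪B e, δψ⟫ := by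
    have hdecomp : o k - B ustar = (o k - B (u k)) + B e - B (ustar - Pih ustar) := by
      simp only [he, map_sub]; abel
    rw [real_inner_comm, hdecomp, inner_sub_left, inner_add_left, hobs k hk δψ hδψ_mem,
      hFortin ustar δψ hδψ_mem, zero_add, sub_zero]
  have hsplit : A (u k) e = A e e + A (Pih ustar) e := by
    rw [← LinearMap.add_apply, ← map_add, he, sub_add_cancel]
  have hdisc := hscheme k hk e (Vh.sub_mem (humem k hk) (hPihmem ustar))
  have hthree := bregmanDist_three_point R (ψ k) (ψ (k - 1)) (B ustar) (o k) (o (k - 1))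
  have hnonneg := bregmanDist_nonneg hRconv (homem k) (homem (k - 1)) (hgrad (k - 1))
  change bregmanDist R (ψ k) (B ustar) (o k) + _
    ≤ bregmanDist R (ψ (k - 1)) (B ustar) (o (k - 1)) - _ + _
  rw [hsplit] at hdisc
  linarith

/-- Per-iteration Bregman descent inequality of the conforming proximal Galerkin
scheme: with `D(p, q) = R(p) − R(q) − ⟨∇R(q), p − q⟩`, `o* = B u*` and
`e_k = u_k − Π u*`, for every `k ≥ 1` one has
`D(o*, o_k) + α_k·A(e_k, e_k) ≤ D(o*, o_{k−1}) − α_k·A(Π u*, e_k) + α_k·f(e_k)`. -/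
theorem statement9
    {V W : Type*} [NormedAddCommGroup V] [InnerProductSpace ℝ V] [CompleteSpace V]
    [NormedAddCommGroup W] [InnerProductSpace ℝ W] [CompleteSpace W]
    (Vh : Submodule ℝ V) (Wh : Submodule ℝ W)
    (B : V →L[ℝ] W)
    (A : V →ₗ[ℝ] V →ₗ[ℝ] ℝ) (C : ℝ) (hC : 0 < C)
    (hAcoer : ∀ v : V, C * ‖v‖ ^ 2 ≤ A v v)
    (f : V →L[ℝ] ℝ)
    (K : Set V) (hKne : K.Nonempty) (hKcl : IsClosed K) (hKcv : Convex ℝ K)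
    (ustar : V) (hustar : ustar ∈ K)
    (hVI : ∀ v ∈ K, f (v - ustar) ≤ A ustar (v - ustar))
    (Pih : V →ₗ[ℝ] V) (hPihmem : ∀ v : V, Pih v ∈ Vh)
    (hFortin : ∀ v : V, ∀ w ∈ Wh, ⟪B (v - Pih v), w⟫ = 0)
    (S : Set W) (hSconv : Convex ℝ S)
    (R : W → ℝ) (hRconv : ConvexOn ℝ S R)
    (α : ℕ → ℝ) (hα : ∀ k, 1 ≤ k → 0 < α k)
    (u : ℕ → V) (ψ : ℕ → W) (o : ℕ → W)
    (humem : ∀ k, 1 ≤ k → u k ∈ Vh) (hψmem : ∀ k, ψ k ∈ Wh)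
    (homem : ∀ k, o k ∈ S)
    (hgrad : ∀ k, HasGradientAt R (ψ k) (o k))
    (hobs : ∀ k, 1 ≤ k → ∀ w ∈ Wh, ⟪o k - B (u k), w⟫ = 0)
    (hostar : B ustar ∈ S)
    (hscheme : ∀ k, 1 ≤ k → ∀ v ∈ Vh,
      α k * A (u k) v + ⟪B v, ψ k - ψ (k - 1)⟫ = α k * f v) :
    ∀ k, 1 ≤ k →
      (R (B ustar) - R (o k) - ⟪ψ k, B ustar - o k⟫)
          + α k * A (u k - Pih ustar) (u k - Pih ustar)
        ≤ (R (B ustar) - R (o (k - 1)) - ⟪ψ (k - 1), B ustar - o (k - 1)⟫)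
          - α k * A (Pih ustar) (u k - Pih ustar)
          + α k * f (u k - Pih ustar) :=
  statement9_general Vh Wh B A f ustar Pih hPihmem hFortin S R hRconv α u ψ o humem hψmem homem
    hgrad hobs hscheme
end

section
/- Let V and W be real Hilbert spaces, V_h ⊆ V and W_h ⊆ W subspaces, B : V → W bounded linear, A : V × V → ℝ bilinear with |A(u,v)| ≤ M·‖u‖·‖v‖ for all u, v, f a continuous linear functional on V, u* ∈ V, and λ* ∈ W with ⟨λ*, B v⟩ = A(u*, v) − f(v) for all v ∈ V. Let Π : V → V_h be a linear Fortin map with ⟨B(v − Π v), w⟩ = 0 for all v ∈ V, w ∈ W_h, and ‖Π v‖ ≤ C_Π·‖v‖ for all v ∈ V. Let α_k > 0, ψ₀ ∈ W_h, and (u_k, ψ_k) ∈ V_h × W_h satisfy α_k·A(u_k, v) + ⟨B v, ψ_k − ψ_{k−1}⟩ = α_k·f(v) for all v ∈ V_h and all 1 ≤ k ≤ ℓ; set ū_ℓ = (Σ_{k=1}^ℓ α_k u_k)/(Σ_{k=1}^ℓ α_k) and λ̄_ℓ = (ψ₀ − ψ_ℓ)/(Σ_{k=1}^ℓ α_k).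 Then for every nonzero v ∈ V: ⟨λ̄_ℓ − λ*, B v⟩ ≤ (M·C_Π·‖ū_ℓ − u*‖ + S)·‖v‖, where S := sup over nonzero v ∈ V of |⟨λ*, B(v − Π v)⟩|/‖v‖; equivalently, sup_{v ≠ 0} ⟨λ̄_ℓ − λ*, B v⟩/‖v‖ ≤ M·C_Π·‖ū_ℓ − u*‖ + S. -/
/-!
Averaging the `ℓ` proximal Galerkin steps telescopes the dual increments, so the averaged pair
satisfies the discrete saddle-point equation `⟨λ̄, B w⟩ = A(ū, w) − f(w)` on `V_h`, and `λ̄ ∈ W_h`.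
Write `v = Π v + (v − Π v)`. On `Π v ∈ V_h` the dual error is the primal error,
`⟨λ̄ − λ*, B Π v⟩ = A(ū − u*, Π v)`, bounded by `M C_Π ‖ū − u*‖ ‖v‖`. On `v − Π v` the Fortin
property kills `λ̄ ∈ W_h`, leaving `−⟨λ*, B(v − Π v)⟩`, bounded by the supremum `S`.
-/

open scoped RealInnerProductSpace

open Finset

theorem Finset.sum_Icc_one_sub_pred {G : Type*} [AddCommGroup G] (g : ℕ → G) (n : ℕ) :
    ∑ k ∈ Icc 1 n, (g k - g (k - 1)) = g n - g 0 := by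
  induction n with
  | zero => simp
  | succ n ih =>
    rw [sum_Icc_succ_top (Nat.le_add_left 1 n), ih, Nat.add_sub_cancel]
    abel

/-- Averaged form of the proximal Galerkin scheme, tested against one fixed direction:
`L` plays `A(·, w)`, `y` plays `B w` and `c` plays `f w`. -/
theorem inner_averaged_increment_eq {V W : Type*} [AddCommGroup V] [Module ℝ V]
    [NormedAddCommGroup W] [InnerProductSpace ℝ W]
    (L : V →ₗ[ℝ] ℝ) (c : ℝ) (y : W) (α : ℕ → ℝ) (u : ℕ → V) (ψ : ℕ → W) (ℓ : ℕ)
    (hα : ∑ k ∈ Icc 1 ℓ, α k ≠ 0)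
    (hstep : ∀ k ∈ Icc 1 ℓ, α k * L (u k) + ⟪y, ψ k - ψ (k - 1)⟫ = α k * c) :
    ⟪(∑ k ∈ Icc 1 ℓ, α k)⁻¹ • (ψ 0 - ψ ℓ), y⟫ =
      L ((∑ k ∈ Icc 1 ℓ, α k)⁻¹ • ∑ k ∈ Icc 1 ℓ, α k • u k) - c := by
  have hsum : ∑ k ∈ Icc 1 ℓ, α k * L (u k) + ⟪y, ψ ℓ - ψ 0⟫ = (∑ k ∈ Icc 1 ℓ, α k) * c := by
    rw [← sum_Icc_one_sub_pred ψ, inner_sum, sum_mul, ← sum_add_distrib]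
    exact sum_congr rfl hstep
  rw [real_inner_smul_left, map_smul, map_sum, smul_eq_mul, real_inner_comm, inner_sub_right]
  simp only [map_smul, smul_eq_mul]
  rw [inner_sub_right] at hsum
  field_simp
  linarith

theorem nonneg_of_abs_le_mul_norm_mul_norm {V : Type*} [NormedAddCommGroup V]
    (A : V → V → ℝ) {M : ℝ} (hA : ∀ u v, |A u v| ≤ M * ‖u‖ * ‖v‖) {v : V} (hv : v ≠ 0) :
    0 ≤ M := by
  have hnv : 0 < ‖v‖ := norm_pos_iff.mpr hv
  have h := (abs_nonneg (A v v)).trans (hA v v)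
  rw [mul_assoc] at h
  exact nonneg_of_mul_nonneg_left h (mul_pos hnv hnv)

/-- The linear bound `hg` makes the `iSup` a genuine supremum rather than the junk value `0`. -/
theorem abs_le_iSup_div_norm_mul_norm {V : Type*} [NormedAddCommGroup V] (g : V → ℝ) {K : ℝ}
    (hg : ∀ x, |g x| ≤ K * ‖x‖) {v : V} (hv : v ≠ 0) :
    |g v| ≤ (⨆ x : {x : V // x ≠ 0}, |g x| / ‖(x : V)‖) * ‖v‖ := by
  have hbdd : BddAbove (Set.range fun x : {x : V // x ≠ 0} => |g x| / ‖(x : V)‖) := by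
    refine ⟨K, ?_⟩
    rintro r ⟨⟨x, hx⟩, rfl⟩
    exact (div_le_iff₀ (norm_pos_iff.mpr hx)).mpr (hg x)
  exact (div_le_iff₀ (norm_pos_iff.mpr hv)).mp (le_ciSup hbdd ⟨v, hv⟩)

theorem abs_inner_map_sub_le {V W : Type*} [NormedAddCommGroup V] [NormedSpace ℝ V]
    [NormedAddCommGroup W] [InnerProductSpace ℝ W] (lam : W) (B : V →L[ℝ] W) (P : V → V)
    {C : ℝ} (hP : ∀ x, ‖P x‖ ≤ C * ‖x‖) (x : V) :
    |⟪lam, B (x - P x)⟫| ≤ ‖lam‖ * ‖B‖ * (1 + C) * ‖x‖ :=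
  calc |⟪lam, B (x - P x)⟫| ≤ ‖lam‖ * (‖B‖ * ‖x - P x‖) :=
        (abs_real_inner_le_norm _ _).trans (by gcongr; exact B.le_opNorm _)
    _ ≤ ‖lam‖ * (‖B‖ * (‖x‖ + C * ‖x‖)) := by
        gcongr
        exact (norm_sub_le _ _).trans (by linarith [hP x])
    _ = ‖lam‖ * ‖B‖ * (1 + C) * ‖x‖ := by ring

theorem statement11_general
    {V W : Type*} [NormedAddCommGroup V] [InnerProductSpace ℝ V]
    [NormedAddCommGroup W] [InnerProductSpace ℝ W]
    (Vh : Submodule ℝ V) (Wh : Submodule ℝ W)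
    (B : V →L[ℝ] W)
    (A : V →ₗ[ℝ] V →ₗ[ℝ] ℝ) (M : ℝ)
    (hAbdd : ∀ u v : V, |A u v| ≤ M * ‖u‖ * ‖v‖)
    (f : V →L[ℝ] ℝ) (ustar : V)
    (lam : W) (hlam : ∀ v : V, ⟪lam, B v⟫ = A ustar v - f v)
    (Pih : V →ₗ[ℝ] V) (hPihmem : ∀ v : V, Pih v ∈ Vh)
    (hFortin : ∀ v : V, ∀ w ∈ Wh, ⟪B (v - Pih v), w⟫ = 0)
    (CPih : ℝ) (hPihbdd : ∀ v : V, ‖Pih v‖ ≤ CPih * ‖v‖)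
    (ℓ : ℕ) (hℓ : 1 ≤ ℓ)
    (α : ℕ → ℝ) (hα : ∀ k, 1 ≤ k → k ≤ ℓ → 0 < α k)
    (u : ℕ → V) (ψ : ℕ → W)
    (hψmem : ∀ k, k ≤ ℓ → ψ k ∈ Wh)
    (hscheme : ∀ k, 1 ≤ k → k ≤ ℓ → ∀ v ∈ Vh,
      α k * A (u k) v + ⟪B v, ψ k - ψ (k - 1)⟫ = α k * f v)
    (ubar : V)
    (hubar : ubar =
      (∑ k ∈ Finset.Icc 1 ℓ, α k)⁻¹ • ∑ k ∈ Finset.Icc 1 ℓ, α k • u k)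
    (lambar : W)
    (hlambar : lambar = (∑ k ∈ Finset.Icc 1 ℓ, α k)⁻¹ • (ψ 0 - ψ ℓ)) :
    ∀ v : V, v ≠ 0 →
      ⟪lambar - lam, B v⟫ ≤
        (M * CPih * ‖ubar - ustar‖ +
          ⨆ x : {x : V // x ≠ 0}, |⟪lam, B ((x : V) - Pih (x : V))⟫| / ‖(x : V)‖) * ‖v‖ := by
  intro v hv
  have hM : 0 ≤ M := nonneg_of_abs_le_mul_norm_mul_norm (fun x y => A x y) hAbdd hv
  have hαsum : ∑ k ∈ Icc 1 ℓ, α k ≠ 0 :=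
    (sum_pos (fun k hk => hα k (mem_Icc.mp hk).1 (mem_Icc.mp hk).2)
      ⟨1, mem_Icc.mpr ⟨le_rfl, hℓ⟩⟩).ne'
  have hlambar_mem : lambar ∈ Wh :=
    hlambar ▸ Wh.smul_mem _ (Wh.sub_mem (hψmem 0 ℓ.zero_le) (hψmem ℓ le_rfl))
  have herror : ⟪lambar - lam, B (Pih v)⟫ = A (ubar - ustar) (Pih v) := by
    have hsaddle := inner_averaged_increment_eq (A.flip (Pih v)) (f (Pih v)) (B (Pih v)) α u ψ ℓ
      hαsum fun k hk => hscheme k (mem_Icc.mp hk).1 (mem_Icc.mp hk).2 _ (hPihmem v)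
    rw [← hubar, ← hlambar, LinearMap.flip_apply] at hsaddle
    rw [inner_sub_left, hsaddle, hlam, map_sub, LinearMap.sub_apply]
    ring
  have hresidual : ⟪lambar - lam, B (v - Pih v)⟫ = -⟪lam, B (v - Pih v)⟫ := by
    rw [inner_sub_left, real_inner_comm, hFortin v lambar hlambar_mem, zero_sub]
  have hresidual_le := abs_le_iSup_div_norm_mul_norm (fun x => ⟪lam, B (x - Pih x)⟫)
    (abs_inner_map_sub_le lam B Pih hPihbdd) hv
  calc ⟪lambar - lam, B v⟫
      = A (ubar - ustar) (Pih v) + -⟪lam, B (v - Pih v)⟫ := by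
        rw [← herror, ← hresidual, ← inner_add_right, ← map_add, add_sub_cancel]
    _ ≤ M * ‖ubar - ustar‖ * (CPih * ‖v‖) +
          (⨆ x : {x : V // x ≠ 0}, |⟪lam, B ((x : V) - Pih (x : V))⟫| / ‖(x : V)‖) * ‖v‖ := by
        gcongr
        · exact (le_abs_self _).trans ((hAbdd _ _).trans
            (mul_le_mul_of_nonneg_left (hPihbdd v) (mul_nonneg hM (norm_nonneg _))))
        · exact (neg_le_abs _).trans hresidual_le
    _ = _ := by ring

/-- Best approximation estimate for the averaged dual variable
`λ̄_ℓ = (ψ₀ − ψ_ℓ)/(Σ α_k)`: for every nonzero `v`,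
`⟨λ̄_ℓ − λ*, B v⟩ ≤ (M·C_Π·‖ū_ℓ − u*‖ + S)·‖v‖`, where
`S = sup_{v ≠ 0} |⟨λ*, B(v − Π v)⟩| / ‖v‖`. -/
theorem statement11
    {V W : Type*} [NormedAddCommGroup V] [InnerProductSpace ℝ V] [CompleteSpace V]
    [NormedAddCommGroup W] [InnerProductSpace ℝ W] [CompleteSpace W]
    (Vh : Submodule ℝ V) (Wh : Submodule ℝ W)
    (B : V →L[ℝ] W)
    (A : V →ₗ[ℝ] V →ₗ[ℝ] ℝ) (M : ℝ)
    (hAbdd : ∀ u v : V, |A u v| ≤ M * ‖u‖ * ‖v‖)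
    (f : V →L[ℝ] ℝ) (ustar : V)
    (lam : W) (hlam : ∀ v : V, ⟪lam, B v⟫ = A ustar v - f v)
    (Pih : V →ₗ[ℝ] V) (hPihmem : ∀ v : V, Pih v ∈ Vh)
    (hFortin : ∀ v : V, ∀ w ∈ Wh, ⟪B (v - Pih v), w⟫ = 0)
    (CPih : ℝ) (hPihbdd : ∀ v : V, ‖Pih v‖ ≤ CPih * ‖v‖)
    (ℓ : ℕ) (hℓ : 1 ≤ ℓ)
    (α : ℕ → ℝ) (hα : ∀ k, 1 ≤ k → k ≤ ℓ → 0 < α k)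
    (u : ℕ → V) (ψ : ℕ → W)
    (humem : ∀ k, 1 ≤ k → k ≤ ℓ → u k ∈ Vh)
    (hψmem : ∀ k, k ≤ ℓ → ψ k ∈ Wh)
    (hscheme : ∀ k, 1 ≤ k → k ≤ ℓ → ∀ v ∈ Vh,
      α k * A (u k) v + ⟪B v, ψ k - ψ (k - 1)⟫ = α k * f v)
    (ubar : V)
    (hubar : ubar =
      (∑ k ∈ Finset.Icc 1 ℓ, α k)⁻¹ • ∑ k ∈ Finset.Icc 1 ℓ, α k • u k)
    (lambar : W)
    (hlambar : lambar = (∑ k ∈ Finset.Icc 1 ℓ, α k)⁻¹ • (ψ 0 - ψ ℓ)) :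
    ∀ v : V, v ≠ 0 →
      ⟪lambar - lam, B v⟫ ≤
        (M * CPih * ‖ubar - ustar‖ +
          ⨆ x : {x : V // x ≠ 0}, |⟪lam, B ((x : V) - Pih (x : V))⟫| / ‖(x : V)‖) * ‖v‖ :=
  statement11_general Vh Wh B A M hAbdd f ustar lam hlam Pih hPihmem hFortin CPih hPihbdd ℓ hℓ α hα
    u ψ hψmem hscheme ubar hubar lambar hlambar
end
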